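/- arXiv:2002.04190 — 2 statements merged into one kernel-verified Lean document; each statement's English description precedes it below -/
import Mathlib

section
/- Let (a_n) be an arithmetic sequence and x ∈ 𝕋 with canonical representation x = Σ c_n/a_n. If the natural density of supp(x) = {n : c_n ≠ 0} is zero, then x is a topological s-torsion element, i.e., a_n x → 0 statistically in 𝕋. -/
open Filter Topology Set

/-- Upper natural density of a set of naturals. -/
noncomputable def upperDensity (A : Set ℕ) : ℝ :=
  Filter.limsup (fun n => (Nat.card ↥(A ∩ Set.Iio n) : ℝ) / n) Filter.atTop

/-- `A` has natural density `δ`. -/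
def HasDensity (A : Set ℕ) (δ : ℝ) : Prop :=
  Filter.Tendsto (fun n => (Nat.card ↥(A ∩ Set.Iio n) : ℝ) / n) Filter.atTop (nhds δ)

/-- Statistical convergence of a real sequence. -/
def StatTendsto (x : ℕ → ℝ) (ξ : ℝ) : Prop :=
  ∀ ε : ℝ, 0 < ε → HasDensity {n | ε ≤ |x n - ξ|} 0

/-- An arithmetic sequence: `a 0 = 1 < a 1 < a 2 < ⋯` and `a n ∣ a (n+1)`. -/
def IsArithmeticSeq (a : ℕ → ℕ) : Prop :=
  a 0 = 1 ∧ StrictMono a ∧ ∀ n, a n ∣ a (n + 1)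

/-- The ratio `q n = a n / a (n-1)` as a real number. -/
noncomputable def qr (a : ℕ → ℕ) (n : ℕ) : ℝ := (a n : ℝ) / (a (n - 1) : ℝ)

/-- `(c n)` is a canonical representation sequence w.r.t. `(a n)`:
`0 ≤ c n < q n` and `c n < q n - 1` for infinitely many `n`. -/
def IsCanonicalRep (a : ℕ → ℕ) (c : ℕ → ℕ) : Prop :=
  c 0 = 0 ∧ (∀ n, 1 ≤ n → c n < a n / a (n - 1)) ∧
    (∀ N, ∃ n, N ≤ n ∧ 1 ≤ n ∧ c n + 1 < a n / a (n - 1))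

/-- Support of (the canonical representation of) `x`. -/
def suppRep (c : ℕ → ℕ) : Set ℕ := {n | 1 ≤ n ∧ c n ≠ 0}

/-- `supp_q(x) = {n : c n = q n - 1}`. -/
def suppqRep (a c : ℕ → ℕ) : Set ℕ := {n | 1 ≤ n ∧ c n + 1 = a n / a (n - 1)}

/-- A set `S ⊆ ℕ` is `q`-bounded if `(q n)` is bounded on `S`. -/
def QBounded (a : ℕ → ℕ) (S : Set ℕ) : Prop := ∃ M, ∀ n ∈ S, a n / a (n - 1) ≤ M

/-- A set `S ⊆ ℕ` is `q`-divergent if `q n → ∞` along `n ∈ S`. -/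
def QDivergent (a : ℕ → ℕ) (S : Set ℕ) : Prop :=
  Filter.Tendsto (fun n => a n / a (n - 1)) (Filter.atTop ⊓ Filter.principal S) Filter.atTop

/-- Statistical convergence in a topological space, via neighborhoods. -/
def StatNhdTendsto {α : Type*} [TopologicalSpace α] (y : ℕ → α) (ℓ : α) : Prop :=
  ∀ U ∈ nhds ℓ, HasDensity {n | y n ∉ U} 0

/-!
Write `x = ∑ c_k / a_k` and `r_n = ∑_{k > n} c_k / a_k`. Since `a_k ∣ a_n` for `k ≤ n`, we have
`a_n x = a_n r_n` in `𝕋`, and the digit bound `c_k < a_k / a_{k-1}` makes the tail telescope to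
`r_n ≤ 1 / a_n`. If `c` vanishes on `(n, n + m]`, then `r_n = r_{n+m} ≤ 1 / a_{n+m} ≤ 2^{-m} / a_n`,
so `a_n x` lies within `2^{-m}` of `0`. Every other `n` lies in one of the shifts `supp(x) - j`,
`1 ≤ j ≤ m`, and a finite union of shifts of a density-zero set has density zero.
-/

lemma HasDensity.tendsto_ncard {A : Set ℕ} {δ : ℝ} (h : HasDensity A δ) :
    Tendsto (fun n => ((A ∩ Iio n).ncard : ℝ) / n) atTop (𝓝 δ) := by
  simpa [HasDensity, Nat.card_coe_set_eq] using h

lemma hasDensity_zero_of_ncard_le {A : Set ℕ} {f : ℕ → ℝ}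
    (hf : Tendsto (fun n => f n / n) atTop (𝓝 0)) (hA : ∀ n, ((A ∩ Iio n).ncard : ℝ) ≤ f n) :
    HasDensity A 0 := by
  refine squeeze_zero (fun n => by positivity) (fun n => ?_) hf
  rw [Nat.card_coe_set_eq]
  exact div_le_div_of_nonneg_right (hA n) n.cast_nonneg

lemma HasDensity.zero_mono {A B : Set ℕ} (hB : HasDensity B 0) (hAB : A ⊆ B) :
    HasDensity A 0 :=
  hasDensity_zero_of_ncard_le hB.tendsto_ncard fun n => by
    exact_mod_cast ncard_le_ncard (inter_subset_inter_left _ hAB) ((finite_Iio n).inter_of_right B)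

lemma HasDensity.zero_union {A B : Set ℕ} (hA : HasDensity A 0) (hB : HasDensity B 0) :
    HasDensity (A ∪ B) 0 := by
  refine hasDensity_zero_of_ncard_le (f := fun n => (A ∩ Iio n).ncard + (B ∩ Iio n).ncard)
    (by simpa [add_div] using hA.tendsto_ncard.add hB.tendsto_ncard) fun n => ?_
  rw [union_inter_distrib_right]
  exact_mod_cast ncard_union_le _ _

lemma HasDensity.zero_biUnion {ι : Type*} (s : Finset ι) {A : ι → Set ℕ}
    (hA : ∀ i ∈ s, HasDensity (A i) 0) : HasDensity (⋃ i ∈ s, A i) 0 := by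
  classical
  induction s using Finset.induction_on with
  | empty => simp [HasDensity]
  | insert i s _ ih =>
    rw [Finset.set_biUnion_insert]
    exact (hA i (s.mem_insert_self i)).zero_union
      (ih fun j hj => hA j (Finset.mem_insert_of_mem hj))

lemma ncard_preimage_add_inter_Iio_le (S : Set ℕ) (j n : ℕ) :
    ({k | k + j ∈ S} ∩ Iio n).ncard ≤ (S ∩ Iio n).ncard + j := by
  calc ({k | k + j ∈ S} ∩ Iio n).ncard
      ≤ (S ∩ Iio n ∪ Ico n (n + j)).ncard := by
        refine ncard_le_ncard_of_injOn (· + j) (fun k ⟨hkS, hkn⟩ => ?_)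
          (add_left_injective j).injOn (((finite_Iio n).inter_of_right S).union (finite_Ico _ _))
        by_cases hk : k + j < n
        · exact Or.inl ⟨hkS, hk⟩
        · exact Or.inr ⟨not_lt.1 hk, by simp only [mem_Iio] at hkn; omega⟩
    _ ≤ (S ∩ Iio n).ncard + (Ico n (n + j)).ncard := ncard_union_le _ _
    _ = (S ∩ Iio n).ncard + j := by
        rw [← Finset.coe_Ico, ncard_coe_finset, Nat.card_Ico, Nat.add_sub_cancel_left]

lemma HasDensity.zero_preimage_add {S : Set ℕ} (hS : HasDensity S 0) (j : ℕ) :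
    HasDensity {k | k + j ∈ S} 0 :=
  hasDensity_zero_of_ncard_le (f := fun n => (S ∩ Iio n).ncard + j)
    (by simpa [add_div] using hS.tendsto_ncard.add (tendsto_const_div_atTop_nhds_zero_nat (j : ℝ)))
    fun n => by
    exact_mod_cast ncard_preimage_add_inter_Iio_le S j n

namespace IsArithmeticSeq

variable {a : ℕ → ℕ}

lemma pos (ha : IsArithmeticSeq a) (n : ℕ) : 0 < a n :=
  Nat.lt_of_lt_of_le (by simp [ha.1]) (ha.2.1.monotone n.zero_le)

lemma dvd_of_le (ha : IsArithmeticSeq a) {k n : ℕ} (h : k ≤ n) : a k ∣ a n := by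
  induction n, h using Nat.le_induction with
  | base => rfl
  | succ n _ ih => exact ih.trans (ha.2.2 n)

lemma two_pow_mul_le (ha : IsArithmeticSeq a) (n m : ℕ) : 2 ^ m * a n ≤ a (n + m) := by
  induction m with
  | zero => simp
  | succ m ih =>
    obtain ⟨d, hd⟩ := ha.2.2 (n + m)
    have hlt : a (n + m) < a (n + m) * d := hd ▸ ha.2.1 (Nat.lt_succ_self _)
    have hd2 : 2 ≤ d := by
      by_contra! h
      interval_cases d <;> simp at hlt
    calc 2 ^ (m + 1) * a n = 2 * (2 ^ m * a n) := by ring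
      _ ≤ d * a (n + m) := Nat.mul_le_mul hd2 ih
      _ = a (n + (m + 1)) := by rw [mul_comm, ← hd]; rfl

lemma mul_sum_range_eq_natCast (ha : IsArithmeticSeq a) (c : ℕ → ℕ) (n : ℕ) :
    (a n : ℝ) * ∑ k ∈ Finset.range (n + 1), (c k : ℝ) / a k =
      ((∑ k ∈ Finset.range (n + 1), a n / a k * c k : ℕ) : ℝ) := by
  rw [Finset.mul_sum, Nat.cast_sum]
  refine Finset.sum_congr rfl fun k hk => ?_
  have hak : (a k : ℝ) ≠ 0 := by exact_mod_cast (ha.pos k).ne'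
  rw [Nat.cast_mul, Nat.cast_div (ha.dvd_of_le (Finset.mem_range_succ_iff.1 hk)) hak]
  ring

end IsArithmeticSeq

noncomputable def repTail (a c : ℕ → ℕ) (n : ℕ) : ℝ :=
  ∑' i, (c (i + (n + 1)) : ℝ) / a (i + (n + 1))

lemma repTail_nonneg (a c : ℕ → ℕ) (n : ℕ) : 0 ≤ repTail a c n :=
  tsum_nonneg fun _ => by positivity

namespace IsCanonicalRep

variable {a c : ℕ → ℕ}

lemma div_le_inv_sub_inv (ha : IsArithmeticSeq a) (hc : IsCanonicalRep a c) (n : ℕ) :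
    (c (n + 1) : ℝ) / a (n + 1) ≤ (a n : ℝ)⁻¹ - (a (n + 1) : ℝ)⁻¹ := by
  obtain ⟨q, hq⟩ := ha.2.2 n
  have han : 0 < a n := ha.pos n
  have hcq : (c (n + 1) : ℝ) + 1 ≤ q := by
    have := hc.2.1 (n + 1) n.succ_pos
    rw [Nat.add_sub_cancel, hq, Nat.mul_div_cancel_left _ han] at this
    exact_mod_cast this
  have hqpos : (0 : ℝ) < q := by linarith [(c (n + 1)).cast_nonneg (α := ℝ)]
  have hsplit : (a n : ℝ)⁻¹ - ((a n : ℝ) * q)⁻¹ = (q - 1) / (a n * q) := by field_simp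
  rw [hq, Nat.cast_mul, hsplit]
  exact div_le_div_of_nonneg_right (by linarith) (by positivity)

lemma sum_range_le (ha : IsArithmeticSeq a) (hc : IsCanonicalRep a c) (n k : ℕ) :
    ∑ i ∈ Finset.range k, (c (i + (n + 1)) : ℝ) / a (i + (n + 1)) ≤ (a n : ℝ)⁻¹ :=
  calc ∑ i ∈ Finset.range k, (c (i + (n + 1)) : ℝ) / a (i + (n + 1))
      ≤ ∑ i ∈ Finset.range k, ((a (i + n) : ℝ)⁻¹ - (a (i + 1 + n) : ℝ)⁻¹) :=
        Finset.sum_le_sum fun i _ => by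
          simpa only [add_right_comm i 1 n, add_assoc] using hc.div_le_inv_sub_inv ha (i + n)
    _ = (a n : ℝ)⁻¹ - (a (k + n) : ℝ)⁻¹ := by
        simpa using Finset.sum_range_sub' (fun i => (a (i + n) : ℝ)⁻¹) k
    _ ≤ (a n : ℝ)⁻¹ := sub_le_self _ (by positivity)

lemma summable_tail (ha : IsArithmeticSeq a) (hc : IsCanonicalRep a c) (n : ℕ) :
    Summable fun i => (c (i + (n + 1)) : ℝ) / a (i + (n + 1)) :=
  summable_of_sum_range_le (fun _ => by positivity) (hc.sum_range_le ha n)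

lemma summable (ha : IsArithmeticSeq a) (hc : IsCanonicalRep a c) :
    Summable fun k => (c k : ℝ) / a k :=
  (summable_nat_add_iff 1).1 (hc.summable_tail ha 0)

lemma repTail_le (ha : IsArithmeticSeq a) (hc : IsCanonicalRep a c) (n : ℕ) :
    repTail a c n ≤ (a n : ℝ)⁻¹ :=
  Real.tsum_le_of_sum_range_le (fun _ => by positivity) (hc.sum_range_le ha n)

lemma repTail_eq_add (ha : IsArithmeticSeq a) (hc : IsCanonicalRep a c) (n : ℕ) :
    repTail a c n = (c (n + 1) : ℝ) / a (n + 1) + repTail a c (n + 1) := by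
  rw [repTail, (hc.summable_tail ha n).tsum_eq_zero_add, repTail]
  simp only [zero_add, add_assoc, add_comm 1 (n + 1)]

lemma repTail_eq_of_forall_lt_eq_zero (ha : IsArithmeticSeq a) (hc : IsCanonicalRep a c)
    {n m : ℕ} (h : ∀ j < m, c (j + (n + 1)) = 0) : repTail a c n = repTail a c (n + m) := by
  induction m with
  | zero => rfl
  | succ m ih =>
    have hcm : c (n + m + 1) = 0 := by
      rw [show n + m + 1 = m + (n + 1) by ring]
      exact h m m.lt_succ_self
    rw [ih fun j hj => h j (hj.trans m.lt_succ_self), hc.repTail_eq_add ha (n + m), hcm,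
      Nat.cast_zero, zero_div, zero_add]
    rfl

lemma nsmul_coe_tsum (ha : IsArithmeticSeq a) (hc : IsCanonicalRep a c) (n : ℕ) :
    a n • ((∑' k, (c k : ℝ) / a k : ℝ) : AddCircle (1 : ℝ)) =
      ((a n * repTail a c n : ℝ) : AddCircle (1 : ℝ)) := by
  rw [← (hc.summable ha).sum_add_tsum_nat_add (n + 1), ← AddCircle.coe_nsmul, nsmul_eq_mul,
    mul_add, ha.mul_sum_range_eq_natCast, AddCircle.coe_add, repTail,
    (AddCircle.coe_eq_zero_iff 1).2 ⟨_, zsmul_one _⟩, zero_add]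

lemma mul_repTail_le (ha : IsArithmeticSeq a) (hc : IsCanonicalRep a c) {n m : ℕ}
    (h : ∀ j < m, c (j + (n + 1)) = 0) : a n * repTail a c n ≤ ((2 : ℝ) ^ m)⁻¹ := by
  have hpos : (0 : ℝ) < a (n + m) := by exact_mod_cast ha.pos (n + m)
  have hgrowth : (2 : ℝ) ^ m * a n ≤ a (n + m) := by exact_mod_cast ha.two_pow_mul_le n m
  calc a n * repTail a c n = a n * repTail a c (n + m) := by
        rw [hc.repTail_eq_of_forall_lt_eq_zero ha h]
    _ ≤ a n * (a (n + m) : ℝ)⁻¹ := mul_le_mul_of_nonneg_left (hc.repTail_le ha _) (by positivity)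
    _ ≤ ((2 : ℝ) ^ m)⁻¹ := by
        rw [← div_eq_mul_inv, div_le_iff₀ hpos, ← div_eq_inv_mul, le_div_iff₀ (by positivity)]
        linarith

end IsCanonicalRep

/-- If `d(supp(x)) = 0`, then `x` is a topological `s`-torsion element:
`a_n x → 0` statistically in `𝕋`. -/
theorem sTorsion_of_density_zero_supp (a c : ℕ → ℕ) (ha : IsArithmeticSeq a)
    (hc : IsCanonicalRep a c) (x : AddCircle (1 : ℝ))
    (hx : x = ((∑' n, (c n : ℝ) / (a n : ℝ) : ℝ) : AddCircle (1 : ℝ)))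
    (hd : HasDensity (suppRep c) 0) :
    StatNhdTendsto (fun n => a n • x) (0 : AddCircle (1 : ℝ)) := by
  intro U hU
  have hV : ((↑) : ℝ → AddCircle (1 : ℝ)) ⁻¹' U ∈ 𝓝 (0 : ℝ) :=
    continuous_quotient_mk'.continuousAt.preimage_mem_nhds hU
  obtain ⟨ε, hε, hball⟩ := Metric.mem_nhds_iff.1 hV
  obtain ⟨m, hm⟩ := exists_pow_lt_of_lt_one hε (by norm_num : (2⁻¹ : ℝ) < 1)
  refine (HasDensity.zero_biUnion (Finset.range m)
    fun j _ => hd.zero_preimage_add (j + 1)).zero_mono fun n hn => ?_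
  by_contra hnotin
  refine hn ?_
  show a n • x ∈ U
  rw [hx, hc.nsmul_coe_tsum ha n]
  refine hball ?_
  have hzero : ∀ j < m, c (j + (n + 1)) = 0 := fun j hj => by
    by_contra hne
    exact hnotin (mem_biUnion (Finset.mem_range.2 hj)
      ⟨by omega, by rwa [add_left_comm, ← add_assoc]⟩)
  rw [Metric.mem_ball, Real.dist_eq, sub_zero,
    abs_of_nonneg (mul_nonneg (Nat.cast_nonneg _) (repTail_nonneg a c n))]
  exact (hc.mul_repTail_le ha hzero).trans_lt (by rwa [← inv_pow])
end

section
/- Define q_n as the 2-adic valuation of n plus 1, i.e., q_n = i where n = 2^{i-1}(2k-1) for some k ∈ ℕ. Then for each i, the set A_i = {n : q_n = i} has natural density 1/2^i, and the sequence (q_n) does not have the d-splitting property. -/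
open Filter Topology Set

/-- The `d`-splitting property of a sequence `(q n)` of naturals. -/
def HasDSplitting (q : ℕ → ℕ) : Prop :=
  ∃ B D : Set ℕ, B ∪ D = Set.univ ∧ Disjoint B D ∧
    (B = ∅ ∨ 0 < upperDensity B) ∧ (D = ∅ ∨ 0 < upperDensity D) ∧
    (0 < upperDensity B →
      ∃ B' : Set ℕ, HasDensity (symmDiff B B') 0 ∧ ∃ M, ∀ n ∈ B', q n ≤ M) ∧
    (0 < upperDensity D →
      ∃ D' : Set ℕ, HasDensity (symmDiff D D') 0 ∧
        Filter.Tendsto q (Filter.atTop ⊓ Filter.principal D') Filter.atTop)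

/-- The splitting property of a sequence `(q n)` of naturals. -/
def HasSplitting (q : ℕ → ℕ) : Prop :=
  ∃ B I : Set ℕ, B ∪ I = Set.univ ∧ Disjoint B I ∧
    (B = ∅ ∨ B.Infinite) ∧ (I = ∅ ∨ I.Infinite) ∧
    (B.Infinite → ∃ M, ∀ n ∈ B, q n ≤ M) ∧
    (I.Infinite → Filter.Tendsto q (Filter.atTop ⊓ Filter.principal I) Filter.atTop)

/-!
The set `{n ≥ 1 : q n = v + 1}` is the residue class of `2 ^ v` modulo `2 ^ (v + 1)`, of
density `1 / 2 ^ (v + 1)`. A `d`-splitting, on the other hand, forces the fibres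
`{n : q n = m}` to have density zero for all large `m`: up to sets of density zero the
fibre avoids the bounded part `B'` (for `m` above its bound) and meets the divergent part
`D'` only finitely often.
-/

lemma hasDensity_of_abs_card_sub_le {A : Set ℕ} {δ C : ℝ}
    (h : ∀ᶠ n : ℕ in atTop, |(Nat.card ↥(A ∩ Iio n) : ℝ) - δ * n| ≤ C) :
    HasDensity A δ := by
  have hdiff : Tendsto (fun n : ℕ => (Nat.card ↥(A ∩ Iio n) : ℝ) / n - δ) atTop (𝓝 0) := by
    refine squeeze_zero_norm' ?_ (tendsto_const_div_atTop_nhds_zero_nat C)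
    filter_upwards [h, eventually_gt_atTop 0] with n hn hnpos
    have hn' : (0 : ℝ) < n := by exact_mod_cast hnpos
    calc ‖(Nat.card ↥(A ∩ Iio n) : ℝ) / n - δ‖
        = |(Nat.card ↥(A ∩ Iio n) : ℝ) - δ * n| / n := by
          rw [Real.norm_eq_abs, ← abs_of_pos hn', ← abs_div, abs_of_pos hn', sub_div,
            mul_div_cancel_right₀ _ hn'.ne']
      _ ≤ C / n := by gcongr
  simpa [HasDensity] using hdiff.add_const δ

lemma Set.Finite.hasDensity_zero {A : Set ℕ} (hA : A.Finite) : HasDensity A 0 := by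
  refine hasDensity_of_abs_card_sub_le (C := Nat.card A) (Eventually.of_forall fun n => ?_)
  rw [zero_mul, sub_zero, Nat.abs_cast, Nat.cast_le]
  exact Nat.card_mono hA inter_subset_left

lemma hasDensity_zero_of_subset {A S : Set ℕ} (h : A ⊆ S) (hS : HasDensity S 0) :
    HasDensity A 0 := by
  refine squeeze_zero (fun n => by positivity) (fun n => ?_) hS
  gcongr
  exact Nat.card_mono ((finite_Iio n).inter_of_right _) (inter_subset_inter_left _ h)

lemma hasDensity_zero_union {S T : Set ℕ} (hS : HasDensity S 0) (hT : HasDensity T 0) :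
    HasDensity (S ∪ T) 0 := by
  refine squeeze_zero (fun n => by positivity) (fun n => ?_) (by simpa using hS.add hT)
  rw [← add_div, union_inter_distrib_right]
  simp only [Nat.card_coe_set_eq]
  gcongr
  exact_mod_cast ncard_union_le _ _

lemma Nat.card_setOf_inter_Iio (p : ℕ → Prop) [DecidablePred p] (b : ℕ) :
    Nat.card ↥({n | p n} ∩ Iio b) = b.count p := by
  have hset : {n | p n} ∩ Iio b = ↑({n ∈ Finset.range b | p n}) := by
    ext; simp [and_comm]
  rw [Nat.count_eq_card_filter_range, hset, Nat.card_coe_set_eq, ncard_coe_finset]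

lemma hasDensity_modEq {r : ℕ} (hr : 0 < r) (v : ℕ) :
    HasDensity {n | n ≡ v [MOD r]} (1 / r) := by
  have hr' : (0 : ℝ) < r := by exact_mod_cast hr
  refine hasDensity_of_abs_card_sub_le (C := 1) (Eventually.of_forall fun b => ?_)
  -- `b / r` counts the full periods below `b`; the partial one contributes at most one more
  have hcount := Nat.count_modEq_card b hr v
  have hfloor : ((b / r : ℕ) : ℝ) ≤ b / r := Nat.cast_div_le
  have hceil : (b : ℝ) / r < (b / r : ℕ) + 1 := by
    have hlt : b < b / r * r + r := Nat.lt_div_mul_add hr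
    rw [div_lt_iff₀ hr', add_mul, one_mul]
    exact_mod_cast hlt
  rw [Nat.card_setOf_inter_Iio, hcount, one_div_mul_eq_div, abs_le]
  constructor <;> split_ifs <;> push_cast <;> linarith

lemma finite_setOf_mem_le_of_tendsto {q : ℕ → ℕ} {D : Set ℕ}
    (h : Tendsto q (atTop ⊓ 𝓟 D) atTop) (m : ℕ) : {n | n ∈ D ∧ q n ≤ m}.Finite := by
  have hlarge : ∀ᶠ n in cofinite, n ∈ D → m < q n := by
    rw [Nat.cofinite_eq_atTop]
    exact eventually_inf_principal.1 (h.eventually_gt_atTop m)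
  refine (eventually_cofinite.1 hlarge).subset fun n ⟨hnD, hnm⟩ hn => ?_
  exact absurd (hn hnD) (not_lt.2 hnm)

lemma setOf_eq_subset_symmDiff_union {q : ℕ → ℕ} {B B' D D' : Set ℕ} (hBD : B ∪ D = univ)
    {M m : ℕ} (hB' : ∀ n ∈ B', q n ≤ M) (hm : M < m) :
    {n | q n = m} ⊆ (symmDiff B B' ∪ symmDiff D D') ∪ {n | n ∈ D' ∧ q n ≤ m} := by
  intro n hn
  have hnB' : n ∉ B' := fun h => (hB' n h).not_gt (hn ▸ hm)
  rcases (hBD ▸ mem_univ n : n ∈ B ∪ D) with hnB | hnD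
  · exact Or.inl (Or.inl (Or.inl ⟨hnB, hnB'⟩))
  · by_cases hnD' : n ∈ D'
    · exact Or.inr ⟨hnD', hn.le⟩
    · exact Or.inl (Or.inr (Or.inl ⟨hnD, hnD'⟩))

theorem HasDSplitting.exists_hasDensity_setOf_eq_zero {q : ℕ → ℕ} (h : HasDSplitting q) :
    ∃ M, ∀ m, M < m → HasDensity {n | q n = m} 0 := by
  obtain ⟨B, D, hBD, -, hB, hD, hBbdd, hDtends⟩ := h
  obtain ⟨B', hBB', M, hB'⟩ :
      ∃ B' : Set ℕ, HasDensity (symmDiff B B') 0 ∧ ∃ M, ∀ n ∈ B', q n ≤ M := by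
    rcases hB with rfl | hBpos
    · exact ⟨∅, by simpa using finite_empty.hasDensity_zero, 0, by simp⟩
    · exact hBbdd hBpos
  obtain ⟨D', hDD', hD'⟩ :
      ∃ D' : Set ℕ, HasDensity (symmDiff D D') 0 ∧ Tendsto q (atTop ⊓ 𝓟 D') atTop := by
    rcases hD with rfl | hDpos
    · exact ⟨∅, by simpa using finite_empty.hasDensity_zero, by simp⟩
    · exact hDtends hDpos
  exact ⟨M, fun m hm => hasDensity_zero_of_subset (setOf_eq_subset_symmDiff_union hBD hB' hm)
    (hasDensity_zero_union (hasDensity_zero_union hBB' hDD')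
      (finite_setOf_mem_le_of_tendsto hD' m).hasDensity_zero)⟩

lemma exists_eq_two_pow_mul_odd_iff_modEq (n v : ℕ) :
    (∃ t, n = 2 ^ v * (2 * t + 1)) ↔ n ≡ 2 ^ v [MOD 2 ^ (v + 1)] := by
  have hlt : 2 ^ v < 2 ^ (v + 1) := Nat.pow_lt_pow_right one_lt_two (lt_add_one v)
  unfold Nat.ModEq
  rw [Nat.mod_eq_of_lt hlt]
  constructor
  · rintro ⟨t, rfl⟩
    rw [show 2 ^ v * (2 * t + 1) = 2 ^ v + 2 ^ (v + 1) * t by ring, Nat.add_mul_mod_self_left,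
      Nat.mod_eq_of_lt hlt]
  · intro hmod
    refine ⟨n / 2 ^ (v + 1), ?_⟩
    have hdiv := Nat.div_add_mod n (2 ^ (v + 1))
    rw [hmod, pow_succ] at hdiv
    rw [pow_succ]
    linarith

lemma setOf_one_le_and_eq_eq_setOf_modEq {q : ℕ → ℕ}
    (hq : ∀ v t, q (2 ^ v * (2 * t + 1)) = v + 1) (v : ℕ) :
    {n | 1 ≤ n ∧ q n = v + 1} = {n | n ≡ 2 ^ v [MOD 2 ^ (v + 1)]} := by
  ext n
  rw [mem_ofPred_eq, mem_ofPred_eq, ← exists_eq_two_pow_mul_odd_iff_modEq]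
  constructor
  · rintro ⟨hn, hqn⟩
    obtain ⟨w, _, ⟨t, rfl⟩, rfl⟩ := Nat.exists_eq_two_pow_mul_odd (n := n) (by omega)
    obtain rfl : w = v := by simpa [hq] using hqn
    exact ⟨t, rfl⟩
  · rintro ⟨t, rfl⟩
    exact ⟨Nat.one_le_iff_ne_zero.2 (by positivity), hq v t⟩

lemma hasDensity_setOf_one_le_and_eq {q : ℕ → ℕ}
    (hq : ∀ v t, q (2 ^ v * (2 * t + 1)) = v + 1) (v : ℕ) :
    HasDensity {n | 1 ≤ n ∧ q n = v + 1} (1 / 2 ^ (v + 1)) := by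
  rw [setOf_one_le_and_eq_eq_setOf_modEq hq]
  exact_mod_cast hasDensity_modEq (Nat.two_pow_pos (v + 1)) (2 ^ v)

/-- Example: for `q n = (2-adic valuation of n) + 1`, each `A_i = {n : q n = i}`
has natural density `1/2^i`, and `(q n)` is not a `d`-splitting sequence. -/
theorem not_dSplitting_of_dyadic (q : ℕ → ℕ)
    (hq : ∀ i k : ℕ, 1 ≤ i → 1 ≤ k → q (2 ^ (i - 1) * (2 * k - 1)) = i) :
    (∀ i, 1 ≤ i → HasDensity {n | 1 ≤ n ∧ q n = i} ((1 : ℝ) / 2 ^ i)) ∧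
      ¬ HasDSplitting q := by
  have hq' : ∀ v t, q (2 ^ v * (2 * t + 1)) = v + 1 := fun v t => by
    simpa [Nat.mul_add] using hq (v + 1) (t + 1) (by omega) (by omega)
  refine ⟨fun i hi => ?_, fun hsplit => ?_⟩
  · obtain ⟨v, rfl⟩ : ∃ v, i = v + 1 := ⟨i - 1, by omega⟩
    exact hasDensity_setOf_one_le_and_eq hq' v
  · obtain ⟨M, hM⟩ := hsplit.exists_hasDensity_setOf_eq_zero
    have hzero : HasDensity {n | 1 ≤ n ∧ q n = M + 1} 0 :=
      hasDensity_zero_of_subset (fun n hn => hn.2) (hM (M + 1) (lt_add_one M))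
    have hpos : (0 : ℝ) < 1 / 2 ^ (M + 1) := by positivity
    exact hpos.ne' (tendsto_nhds_unique (hasDensity_setOf_one_le_and_eq hq' M) hzero)
end
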